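/- Let g(x) = arccos(x) - x·√(1-x²). Then T₁ := ∫₀¹ (π - g(x))² dx = π² - 2π/3 - 64/45. -/

import Mathlib

/-!
With `u = π - arccos x` and `s = √(1 - x²)` one has `u' = 1 / s` and `s' = -x / s`, and the
integrand is `(u + x s)² = u² + 2 u x s + x² - x⁴`. Integrating by parts (`∫ u² = x u² - ∫ 2 x u / s`
with `x / s = -s'`, and `∫ 2 u x s` with `x s = -(s³)' / 3`) gives the elementary primitive
`x u² + 2/3 (2 + x²) u s - 4x/3 + x³/9 - x⁵/5`, whose values at `1` and `0` are
`π² - 64/45` and `2π/3`.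
-/

open Real Set

noncomputable def arccosIntegrandPrimitive (x : ℝ) : ℝ :=
  x * (π - arccos x) ^ 2 + 2 / 3 * (2 + x ^ 2) * (π - arccos x) * √(1 - x ^ 2)
    - 4 / 3 * x + x ^ 3 / 9 - x ^ 5 / 5

lemma hasDerivAt_sqrt_one_sub_sq {x : ℝ} (hx : 1 - x ^ 2 ≠ 0) :
    HasDerivAt (fun y : ℝ => √(1 - y ^ 2)) (-x / √(1 - x ^ 2)) x := by
  convert ((hasDerivAt_pow 2 x).const_sub 1).sqrt hx using 1
  field_simp
  ring

lemma hasDerivAt_arccosIntegrandPrimitive {x : ℝ} (hx : x ∈ Ioo (-1 : ℝ) 1) :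
    HasDerivAt arccosIntegrandPrimitive ((π - arccos x + x * √(1 - x ^ 2)) ^ 2) x := by
  have hpos : 0 < 1 - x ^ 2 := by nlinarith [hx.1, hx.2]
  have hs' := hasDerivAt_sqrt_one_sub_sq hpos.ne'
  set s := √(1 - x ^ 2) with hs_def
  have hs2 : s ^ 2 = 1 - x ^ 2 := sq_sqrt hpos.le
  have hs : s ≠ 0 := (sqrt_pos.mpr hpos).ne'
  have hu : HasDerivAt (fun y => π - arccos y) (1 / s) x :=
    ((hasDerivAt_arccos hx.1.ne' hx.2.ne).const_sub π).congr_deriv (neg_neg _)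
  have hid := hasDerivAt_id' x
  have H : HasDerivAt arccosIntegrandPrimitive _ x := ((((hid.mul (hu.fun_pow 2)).add
    (((((hid.fun_pow 2).const_add 2).const_mul (2 / 3)).mul hu).mul hs')).sub
    (hid.const_mul (4 / 3))).add ((hid.fun_pow 3).div_const 9)).sub ((hid.fun_pow 5).div_const 5)
  refine H.congr_deriv ?_
  simp only [Pi.mul_apply, ← hs_def, Nat.cast_ofNat, Nat.add_one_sub_one, pow_one]
  field_simp
  linear_combination (-18 * (π - arccos x) * x - 27 * x ^ 2 * s) * hs2

lemma continuous_arccosIntegrandPrimitive : Continuous arccosIntegrandPrimitive := by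
  unfold arccosIntegrandPrimitive
  fun_prop

lemma integral_sq_pi_sub_arccos_add_mul_sqrt :
    ∫ x in (0 : ℝ)..1, (π - arccos x + x * √(1 - x ^ 2)) ^ 2 = π ^ 2 - 2 * π / 3 - 64 / 45 := by
  have hint : IntervalIntegrable (fun x : ℝ => (π - arccos x + x * √(1 - x ^ 2)) ^ 2)
      MeasureTheory.volume 0 1 := by
    apply Continuous.intervalIntegrable
    fun_prop
  rw [intervalIntegral.integral_eq_sub_of_hasDerivAt_of_le zero_le_one
    continuous_arccosIntegrandPrimitive.continuousOn
    (fun x hx => hasDerivAt_arccosIntegrandPrimitive ⟨by linarith [hx.1], hx.2⟩) hint]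
  simp only [arccosIntegrandPrimitive, arccos_one, arccos_zero]
  norm_num
  ring

theorem T1_value
    (g : ℝ → ℝ) (hg : ∀ x, g x = Real.arccos x - x * Real.sqrt (1 - x ^ 2)) :
    ∫ x in (0:ℝ)..1, (Real.pi - g x) ^ 2 =
      Real.pi ^ 2 - 2 * Real.pi / 3 - 64 / 45 := by
  simp only [hg, ← sub_add]
  exact integral_sq_pi_sub_arccos_add_mul_sqrt
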